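/- Let k be a field and let R be the 4×4 matrix over k equal to the identity matrix except that its (2,3) entry is 1 (rows and columns indexed 1,…,4), viewed as an endomorphism of V⊗V for V = k². Then R satisfies the Hopf equation R¹²R²³ = R²³R¹³R¹² in End(V⊗V⊗V) if and only if k has characteristic 2; moreover, when char(k) = 2, R is commutative, i.e. R¹²R¹³ = R¹³R¹². -/

import Mathlib

/-!
Write `R19 = 1 + N`, where `N` sends `v₂ ⊗ v₁` to `v₁ ⊗ v₂` and kills the other basis vectors.
Checking both sides of the Hopf equation on the eight basis vectors `vₐ ⊗ v_b ⊗ v_c`, they agree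
on all but `v₂ ⊗ v₁ ⊗ v₁`, where `R²³R¹³R¹²` exceeds `R¹²R²³` by `2 • v₁ ⊗ v₁ ⊗ v₂`. So `R19` is a
Hopf solution exactly when `2 = 0` in `k`, while `R¹²` and `R¹³` commute in every characteristic.
In the code `vᵢ` is `Pi.single (i - 1) 1`, indices of `Fin 2` starting at `0`.
-/

open TensorProduct LinearMap

section HopfEq

variable (k V : Type*) [Field k] [AddCommGroup V] [Module k V]

/-- The flip map `τ : V ⊗ V → V ⊗ V`, `τ(v ⊗ w) = w ⊗ v`. -/
noncomputable def flipMap : V ⊗[k] V →ₗ[k] V ⊗[k] V :=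
  (TensorProduct.comm k V V).toLinearMap

variable {k V}

/-- `R¹² = R ⊗ I` as an endomorphism of `V ⊗ V ⊗ V`. -/
noncomputable def map12 (R : V ⊗[k] V →ₗ[k] V ⊗[k] V) :
    V ⊗[k] (V ⊗[k] V) →ₗ[k] V ⊗[k] (V ⊗[k] V) :=
  (TensorProduct.assoc k V V V).toLinearMap ∘ₗ R.rTensor V ∘ₗ
    (TensorProduct.assoc k V V V).symm.toLinearMap

/-- `R²³ = I ⊗ R` as an endomorphism of `V ⊗ V ⊗ V`. -/
noncomputable def map23 (R : V ⊗[k] V →ₗ[k] V ⊗[k] V) :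
    V ⊗[k] (V ⊗[k] V) →ₗ[k] V ⊗[k] (V ⊗[k] V) :=
  R.lTensor V

/-- `R¹³ = (I ⊗ τ)(R ⊗ I)(I ⊗ τ)` as an endomorphism of `V ⊗ V ⊗ V`. -/
noncomputable def map13 (R : V ⊗[k] V →ₗ[k] V ⊗[k] V) :
    V ⊗[k] (V ⊗[k] V) →ₗ[k] V ⊗[k] (V ⊗[k] V) :=
  (flipMap k V).lTensor V ∘ₗ map12 R ∘ₗ (flipMap k V).lTensor V

/-- `R` is a solution of the Hopf equation: `R¹²R²³ = R²³R¹³R¹²`. -/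
def IsHopfSolution (R : V ⊗[k] V →ₗ[k] V ⊗[k] V) : Prop :=
  map12 R ∘ₗ map23 R = map23 R ∘ₗ map13 R ∘ₗ map12 R

/-- `R` is a solution of the pentagonal equation: `R¹²R¹³R²³ = R²³R¹²`. -/
def IsPentagonSolution (R : V ⊗[k] V →ₗ[k] V ⊗[k] V) : Prop :=
  map12 R ∘ₗ map13 R ∘ₗ map23 R = map23 R ∘ₗ map12 R

end HopfEq

/-- The standard basis `{v₁ ⊗ v₁, v₁ ⊗ v₂, v₂ ⊗ v₁, v₂ ⊗ v₂}` of `k² ⊗ k²`. -/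
noncomputable def basis19 (k : Type*) [Field k] :
    Module.Basis (Fin 2 × Fin 2) k ((Fin 2 → k) ⊗[k] (Fin 2 → k)) :=
  (Pi.basisFun k (Fin 2)).tensorProduct (Pi.basisFun k (Fin 2))

/-- The endomorphism of `k² ⊗ k²` whose matrix in the ordered basis
`{v₁ ⊗ v₁, v₁ ⊗ v₂, v₂ ⊗ v₁, v₂ ⊗ v₂}` is the identity matrix except that the
`(2,3)` entry is `1`: it fixes all basis vectors except `v₂ ⊗ v₁ ↦ v₂ ⊗ v₁ + v₁ ⊗ v₂`. -/
noncomputable def R19 (k : Type*) [Field k] :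
    (Fin 2 → k) ⊗[k] (Fin 2 → k) →ₗ[k] (Fin 2 → k) ⊗[k] (Fin 2 → k) :=
  (basis19 k).constr k fun p =>
    if p = ((1 : Fin 2), (0 : Fin 2)) then basis19 k (1, 0) + basis19 k (0, 1)
    else basis19 k p

lemma ringChar_eq_two_iff {R : Type*} [Ring R] [Nontrivial R] :
    ringChar R = 2 ↔ (2 : R) = 0 :=
  ⟨fun h => by exact_mod_cast h ▸ ringChar.Nat.cast_ringChar,
    fun h => CharP.ringChar_of_prime_eq_zero Nat.prime_two (by exact_mod_cast h)⟩

lemma ext_single_tmul_single_tmul_single {R ι M : Type*} [CommSemiring R] [Finite ι]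
    [DecidableEq ι] [AddCommMonoid M] [Module R M]
    {f g : (ι → R) ⊗[R] ((ι → R) ⊗[R] (ι → R)) →ₗ[R] M}
    (h : ∀ a b c : ι, f (Pi.single a 1 ⊗ₜ (Pi.single b 1 ⊗ₜ Pi.single c 1)) =
      g (Pi.single a 1 ⊗ₜ (Pi.single b 1 ⊗ₜ Pi.single c 1))) : f = g := by
  ext a b c
  exact h a b c

section TripleMaps

variable {k V : Type*} [Field k] [AddCommGroup V] [Module k V]

@[simp]
lemma flipMap_tmul (v w : V) : flipMap k V (v ⊗ₜ w) = w ⊗ₜ v := rfl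

@[simp]
lemma map12_tmul (R : V ⊗[k] V →ₗ[k] V ⊗[k] V) (u v w : V) :
    map12 R (u ⊗ₜ (v ⊗ₜ w)) = TensorProduct.assoc k V V V (R (u ⊗ₜ v) ⊗ₜ w) := rfl

@[simp]
lemma map23_tmul (R : V ⊗[k] V →ₗ[k] V ⊗[k] V) (u v w : V) :
    map23 R (u ⊗ₜ (v ⊗ₜ w)) = u ⊗ₜ R (v ⊗ₜ w) := rfl

@[simp]
lemma map13_tmul (R : V ⊗[k] V →ₗ[k] V ⊗[k] V) (u v w : V) :
    map13 R (u ⊗ₜ (v ⊗ₜ w)) =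
      (flipMap k V).lTensor V (TensorProduct.assoc k V V V (R (u ⊗ₜ w) ⊗ₜ v)) := rfl

end TripleMaps

section R19

variable {k : Type*} [Field k]

lemma R19_single_tmul_single (i j : Fin 2) :
    R19 k (Pi.single i 1 ⊗ₜ Pi.single j 1) =
      Pi.single i 1 ⊗ₜ Pi.single j 1 +
        if (i, j) = (1, 0) then Pi.single 0 1 ⊗ₜ Pi.single 1 1 else 0 := by
  have hb : Pi.single i (1 : k) ⊗ₜ[k] Pi.single j (1 : k) = basis19 k (i, j) := by
    simp [basis19]
  rw [hb, R19, Module.Basis.constr_basis]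
  split_ifs with h
  · obtain ⟨rfl, rfl⟩ := Prod.mk.inj h
    simp [basis19]
  · simp [basis19]

@[simp]
lemma R19_single_one_tmul_single_zero :
    R19 k (Pi.single 1 1 ⊗ₜ Pi.single 0 1) =
      Pi.single 1 1 ⊗ₜ Pi.single 0 1 + Pi.single 0 1 ⊗ₜ Pi.single 1 1 := by
  simpa using R19_single_tmul_single (k := k) 1 0

@[simp]
lemma R19_single_tmul_single_of_ne {i j : Fin 2} (h : (i, j) ≠ (1, 0)) :
    R19 k (Pi.single i 1 ⊗ₜ Pi.single j 1) = Pi.single i 1 ⊗ₜ Pi.single j 1 := by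
  simpa [h] using R19_single_tmul_single (k := k) i j

lemma map12_comp_map13_R19 :
    map12 (R19 k) ∘ₗ map13 (R19 k) = map13 (R19 k) ∘ₗ map12 (R19 k) := by
  refine ext_single_tmul_single_tmul_single fun a b c => ?_
  fin_cases a <;> fin_cases b <;> fin_cases c <;> simp [add_tmul]
  all_goals abel

lemma R19_hopf_apply_of_ne {a b c : Fin 2} (h : (a, b, c) ≠ (1, 0, 0)) :
    (map12 (R19 k) ∘ₗ map23 (R19 k)) (Pi.single a 1 ⊗ₜ (Pi.single b 1 ⊗ₜ Pi.single c 1)) =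
      (map23 (R19 k) ∘ₗ map13 (R19 k) ∘ₗ map12 (R19 k))
        (Pi.single a 1 ⊗ₜ (Pi.single b 1 ⊗ₜ Pi.single c 1)) := by
  fin_cases a <;> fin_cases b <;> fin_cases c <;> simp_all [add_tmul, tmul_add]
  all_goals abel

lemma R19_hopf_apply_one_zero_zero :
    (map23 (R19 k) ∘ₗ map13 (R19 k) ∘ₗ map12 (R19 k))
        (Pi.single 1 1 ⊗ₜ (Pi.single 0 1 ⊗ₜ Pi.single 0 1)) =
      (map12 (R19 k) ∘ₗ map23 (R19 k)) (Pi.single 1 1 ⊗ₜ (Pi.single 0 1 ⊗ₜ Pi.single 0 1)) +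
        (2 : k) • Pi.single 0 1 ⊗ₜ (Pi.single 0 1 ⊗ₜ Pi.single 1 1) := by
  simp [add_tmul, tmul_add, two_smul]
  abel

lemma isHopfSolution_R19_iff : IsHopfSolution (R19 k) ↔ (2 : k) = 0 := by
  constructor
  · intro h
    have hv := ((Pi.basisFun k (Fin 2)).tensorProduct
      ((Pi.basisFun k (Fin 2)).tensorProduct (Pi.basisFun k (Fin 2)))).ne_zero (0, 0, 1)
    simp only [Module.Basis.tensorProduct_apply, Pi.basisFun_apply] at hv
    have h2v := R19_hopf_apply_one_zero_zero (k := k)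
    rw [← h, left_eq_add, smul_eq_zero] at h2v
    exact h2v.resolve_right hv
  · intro h
    refine ext_single_tmul_single_tmul_single fun a b c => ?_
    by_cases habc : (a, b, c) = (1, 0, 0)
    · obtain ⟨rfl, rfl, rfl⟩ : a = 1 ∧ b = 0 ∧ c = 0 := by simpa using habc
      rw [R19_hopf_apply_one_zero_zero, h, zero_smul, add_zero]
    · exact R19_hopf_apply_of_ne habc

end R19

theorem R19_isHopfSolution_iff_char_two (k : Type*) [Field k] :
    (IsHopfSolution (R19 k) ↔ ringChar k = 2) ∧
      (ringChar k = 2 → map12 (R19 k) ∘ₗ map13 (R19 k) = map13 (R19 k) ∘ₗ map12 (R19 k)) :=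
  ⟨isHopfSolution_R19_iff.trans ringChar_eq_two_iff.symm, fun _ => map12_comp_map13_R19⟩
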